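/- Let p = 3, n a positive integer, q = 3ⁿ, and K a finite field with q² = 3^{2n} elements with F its subfield of order q. Let k be an integer with gcd(k, 2n) = 1 and set f(x) = x^{(3^k+1)/2} (a Coulter–Matthews planar function). Then for every c ∈ K the number of x ∈ K with f(x) = c equals the number of y ∈ K with y² = c, and for every θ ∈ K \ {0} with θ^{q+1} a nonsquare in F and all a, b ∈ K, the number of x ∈ K with f(x+a) − b ∈ θF equals 1 if b ∈ θF and equals q+1 if b ∉ θF; hence U_θ = {(x, tθ) : x ∈ K, t ∈ F} ∪ {(∞)} is a unital in the Coulter–Matthews plane Π(f). -/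

import Mathlib

/-!
Write `d = 2 d₁`. Since `gcd(k, 2n) = 1`, `d₁` is odd and its gcd with `3^(2n) - 1` divides
`gcd(3^(2k) - 1, 3^(2n) - 1) = 8`, so `x ↦ x^d₁` permutes `K` and `x^d = (x^d₁)^2`: every
count reduces to one about `y ↦ y^2`.

If `θ^(q+1)` is a nonsquare in `F`, a square root `β` of it in `K` satisfies `β^q = -β`, and
the `F`-linear bijection `L y = θ y^q + β y` satisfies `(L y)^(q+1) = -β (θ y^(2q) - θ^q y^2)`.
Thus `y^2 - b ∈ θF` iff `(L y)^(q+1) = β (b θ^q - b^q θ)`, an element of `F` that vanishes iff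
`b ∈ θF`; and the norm `z ↦ z^(q+1)` takes the value `0` once and every nonzero value of `F`
exactly `q + 1` times.
-/


/-- The point set of the shift plane `Π(f)`: affine points `(x,y)`, points at
infinity `(a)` for `a ∈ K`, and the point `(∞)`. -/
abbrev ShiftPt (K : Type) : Type := (K × K) ⊕ (K ⊕ Unit)

/-- The affine line `L_{a,b} = {(x, f(x+a) − b) : x ∈ K} ∪ {(a)}` of the shift plane. -/
def affLine (K : Type) [Field K] (f : K → K) (a b : K) : Set (ShiftPt K) :=
  {P | (∃ x : K, P = Sum.inl (x, f (x + a) - b)) ∨ P = Sum.inr (Sum.inl a)}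

/-- The vertical line `N_a = {(a,y) : y ∈ K} ∪ {(∞)}` of the shift plane. -/
def vertLine (K : Type) [Field K] (a : K) : Set (ShiftPt K) :=
  {P | (∃ y : K, P = Sum.inl (a, y)) ∨ P = Sum.inr (Sum.inr ())}

/-- The line at infinity of the shift plane. -/
def lineAtInf (K : Type) : Set (ShiftPt K) :=
  {P | ∃ s : K ⊕ Unit, P = Sum.inr s}

/-- The set of all lines of the shift plane `Π(f)`. -/
def shiftLines (K : Type) [Field K] (f : K → K) : Set (Set (ShiftPt K)) :=
  {L | (∃ a b : K, L = affLine K f a b) ∨ (∃ a : K, L = vertLine K a) ∨ L = lineAtInf K}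

/-- The set `θF = {tθ : t ∈ F}`, where `F = {t : t^q = t}` is the subfield of order `q`. -/
def scalarSet (K : Type) [Field K] (q : ℕ) (θ : K) : Set K :=
  {c | ∃ t : K, t ^ q = t ∧ c = t * θ}

/-- The point set `U_θ = {(x, tθ) : x ∈ K, t ∈ F} ∪ {(∞)}`. -/
def unitalSet (K : Type) [Field K] (q : ℕ) (θ : K) : Set (ShiftPt K) :=
  {P | (∃ x t : K, t ^ q = t ∧ P = Sum.inl (x, t * θ)) ∨ P = Sum.inr (Sum.inr ())}

theorem Set.ncard_preimage_of_bijective {α β : Type*} {f : α → β} (hf : Function.Bijective f)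
    (t : Set β) : (f ⁻¹' t).ncard = t.ncard :=
  Set.ncard_preimage_of_injective_subset_range hf.injective (by simp [hf.surjective.range_eq])

theorem three_pow_add_one_mod_eight {k : ℕ} (hk : Odd k) : (3 ^ k + 1) % 8 = 4 := by
  obtain ⟨j, rfl⟩ := hk
  rw [pow_succ, pow_mul, Nat.add_mod, Nat.mul_mod, Nat.pow_mod]
  norm_num

theorem exists_eq_two_mul_coprime_three_pow_sub_one {n k d : ℕ} (hk : Nat.Coprime k (2 * n))
    (hd : 2 * d = 3 ^ k + 1) : ∃ d₁, d = 2 * d₁ ∧ Nat.Coprime d₁ (3 ^ (2 * n) - 1) := by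
  have h8 := three_pow_add_one_mod_eight (Nat.coprime_two_right.mp hk.coprime_mul_right_right)
  have hd₁ : (d / 2) * 4 = 3 ^ k + 1 := by omega
  have hcop8 : Nat.Coprime (d / 2) 8 :=
    (Nat.coprime_two_right.mpr (Nat.odd_iff.mpr (by omega))).pow_right 3
  refine ⟨d / 2, by omega, ?_⟩
  have hdvd : d / 2 ∣ 3 ^ (2 * k) - 1 := by
    rw [mul_comm, pow_mul, ← one_pow 2, Nat.sq_sub_sq, ← hd₁]
    exact (dvd_mul_right _ _).mul_right _
  have hgcd : Nat.gcd (3 ^ (2 * k) - 1) (3 ^ (2 * n) - 1) = 8 := by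
    rw [Nat.pow_sub_one_gcd_pow_sub_one, Nat.gcd_mul_left, hk.coprime_mul_left_right.gcd_eq_one]
    rfl
  have hg8 : Nat.gcd (d / 2) (3 ^ (2 * n) - 1) ∣ 8 := hgcd ▸ Nat.gcd_dvd_gcd_of_dvd_left _ hdvd
  exact (Nat.Coprime.coprime_dvd_left (Nat.gcd_dvd_left _ _) hcop8).eq_one_of_dvd hg8

namespace FiniteField

variable {K : Type*} [Field K] [Fintype K] {m : ℕ}

theorem orderOf_eq_card_sub_one_of_forall_mem_zpowers {g : Kˣ}
    (hg : ∀ x, x ∈ Subgroup.zpowers g) : orderOf g = Fintype.card K - 1 := by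
  rw [orderOf_eq_card_of_forall_mem_zpowers hg, Nat.card_units, Nat.card_eq_fintype_card]

theorem exists_pow_eq_of_pow_eq_one (hm : m ∣ Fintype.card K - 1) {w : K}
    (hw : w ^ ((Fintype.card K - 1) / m) = 1) : ∃ z : K, z ^ m = w := by
  obtain ⟨e, he⟩ := hm
  have hNpos : 0 < m * e := he ▸ Nat.sub_pos_of_lt Fintype.one_lt_card
  rw [he, Nat.mul_div_cancel_left _ (Nat.pos_of_mul_pos_right hNpos)] at hw
  have he0 : 0 < e := Nat.pos_of_mul_pos_left hNpos
  have hw0 : w ≠ 0 := by rintro rfl; simp [he0.ne'] at hw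
  obtain ⟨g, hg⟩ := IsCyclic.exists_generator (α := Kˣ)
  obtain ⟨j, hj : g ^ j = Units.mk0 w hw0⟩ : Units.mk0 w hw0 ∈ Submonoid.powers g := by
    rw [mem_powers_iff_mem_zpowers]; exact hg _
  have : m * e ∣ j * e := by
    rw [← he, ← orderOf_eq_card_sub_one_of_forall_mem_zpowers hg]
    apply orderOf_dvd_of_pow_eq_one
    rw [pow_mul, hj]
    ext; simpa using hw
  obtain ⟨i, rfl⟩ := Nat.dvd_of_mul_dvd_mul_right he0 this
  refine ⟨(g ^ i : Kˣ), ?_⟩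
  rw [← Units.val_pow_eq_pow_val, ← pow_mul, mul_comm, hj, Units.val_mk0]

theorem ncard_pow_eq_of_pow_eq_one (hm : m ∣ Fintype.card K - 1) {w : K}
    (hw : w ^ ((Fintype.card K - 1) / m) = 1) : {z : K | z ^ m = w}.ncard = m := by
  classical
  have hroot := exists_pow_eq_of_pow_eq_one hm hw
  obtain ⟨e, he⟩ := hm
  have hNpos : 0 < m * e := he ▸ Nat.sub_pos_of_lt Fintype.one_lt_card
  have hm0 : 0 < m := Nat.pos_of_mul_pos_right hNpos
  rw [he, Nat.mul_div_cancel_left _ hm0] at hw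
  have hw0 : w ≠ 0 := by rintro rfl; simp [(Nat.pos_of_mul_pos_left hNpos).ne'] at hw
  obtain ⟨g, hg⟩ := IsCyclic.exists_generator (α := Kˣ)
  have hζ : IsPrimitiveRoot ((g ^ e : Kˣ) : K) m := by
    have h := IsPrimitiveRoot.orderOf ((g ^ e : Kˣ) : K)
    rwa [orderOf_units, orderOf_pow, orderOf_eq_card_sub_one_of_forall_mem_zpowers hg, he,
      Nat.gcd_mul_left_left, Nat.mul_div_cancel _ (Nat.pos_of_mul_pos_left hNpos)] at h
  have hset : {z : K | z ^ m = w} = ↑(Polynomial.nthRoots m w).toFinset := by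
    ext z
    simp [Polynomial.mem_nthRoots hm0]
  rw [hset, Set.ncard_coe_finset, Multiset.toFinset_card_of_nodup (hζ.nthRoots_nodup hw0),
    hζ.card_nthRoots, if_pos hroot]

theorem pow_bijective_of_coprime (hm0 : m ≠ 0) (hm : Nat.Coprime m (Fintype.card K - 1)) :
    Function.Bijective (fun x : K => x ^ m) := by
  refine Finite.injective_iff_bijective.mp fun x y (hxy : x ^ m = y ^ m) => ?_
  by_cases hx : x = 0
  · subst hx
    rw [zero_pow hm0, eq_comm, pow_eq_zero_iff hm0] at hxy
    exact hxy.symm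
  by_cases hy : y = 0
  · subst hy
    rwa [zero_pow hm0, pow_eq_zero_iff hm0] at hxy
  have hcop : (Nat.card Kˣ).Coprime m := by
    rwa [Nat.card_units, Nat.card_eq_fintype_card, Nat.coprime_comm]
  have h := (Nat.Coprime.pow_left_bijective hcop).injective
    (a₁ := Units.mk0 x hx) (a₂ := Units.mk0 y hy) (Units.ext (by simpa using hxy))
  simpa using congrArg Units.val h

theorem ncard_setOf_pow_two_mul {d : ℕ} (hd : d ≠ 0)
    (hcop : Nat.Coprime d (Fintype.card K - 1)) (a : K) (P : K → Prop) :
    {x : K | P ((x + a) ^ (2 * d))}.ncard = {y | P (y ^ 2)}.ncard := by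
  have hset : {x : K | P ((x + a) ^ (2 * d))} =
      (fun x => x ^ d) ∘ Equiv.addRight a ⁻¹' {y | P (y ^ 2)} := by
    ext x
    simp [pow_mul']
  rw [hset, Set.ncard_preimage_of_bijective
    ((pow_bijective_of_coprime hd hcop).comp (Equiv.addRight a).bijective)]

end FiniteField

theorem mem_scalarSet_iff {K : Type} [Field K] {q : ℕ} {θ : K} (hθ : θ ≠ 0) {z : K} :
    z ∈ scalarSet K q θ ↔ z ^ q * θ = z * θ ^ q := by
  constructor
  · rintro ⟨t, ht, rfl⟩
    rw [mul_pow, ht]; ring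
  · intro h
    refine ⟨z * θ⁻¹, ?_, by field_simp⟩
    rw [mul_pow, inv_pow]
    field_simp
    linear_combination h

theorem card_sub_one_eq_of_card_eq_sq {α : Type*} [Fintype α] {q : ℕ}
    (hcard : Fintype.card α = q ^ 2) : Fintype.card α - 1 = (q + 1) * (q - 1) := by
  rw [hcard, ← Nat.sq_sub_sq, one_pow]

theorem ne_zero_of_sq_eq_pow_succ {K : Type} [Field K] {q : ℕ} {θ β : K} (hθ : θ ≠ 0)
    (hβ : β ^ 2 = θ ^ (q + 1)) : β ≠ 0 := by
  rintro rfl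
  exact pow_ne_zero _ hθ (by rw [← hβ, zero_pow two_ne_zero])

theorem mul_sub_eq_zero_iff_mem_scalarSet {K : Type} [Field K] {q : ℕ} {θ β : K}
    (hθ : θ ≠ 0) (hβ : β ^ 2 = θ ^ (q + 1)) (b : K) :
    β * (b * θ ^ q - b ^ q * θ) = 0 ↔ b ∈ scalarSet K q θ := by
  rw [mem_scalarSet_iff hθ, mul_eq_zero, sub_eq_zero,
    or_iff_right (ne_zero_of_sq_eq_pow_succ hθ hβ), eq_comm]

section QuadraticExtension

variable {K : Type} [Field K] [Fintype K] {q : ℕ}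

theorem one_lt_of_card_eq_sq (hcard : Fintype.card K = q ^ 2) : 1 < q :=
  (Nat.one_lt_pow_iff two_ne_zero).mp (hcard ▸ Fintype.one_lt_card)

theorem pow_pow_eq_self_of_card_eq_sq (hcard : Fintype.card K = q ^ 2) (x : K) :
    (x ^ q) ^ q = x := by
  rw [← pow_mul, ← sq, ← hcard, FiniteField.pow_card]

theorem pow_sub_one_eq_one_of_pow_eq_self (hcard : Fintype.card K = q ^ 2) {w : K} (hw0 : w ≠ 0)
    (hw : w ^ q = w) : w ^ (q - 1) = 1 := by
  apply mul_right_cancel₀ hw0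
  rw [← pow_succ, Nat.sub_add_cancel (one_lt_of_card_eq_sq hcard).le, one_mul, hw]

theorem ncard_pow_eq_self (hcard : Fintype.card K = q ^ 2) : {t : K | t ^ q = t}.ncard = q := by
  have hq := one_lt_of_card_eq_sq hcard
  have hunits : {t : K | t ^ (q - 1) = 1}.ncard = q - 1 := by
    refine FiniteField.ncard_pow_eq_of_pow_eq_one ?_ (one_pow _)
    rw [card_sub_one_eq_of_card_eq_sq hcard]
    exact dvd_mul_left _ _
  have hset : {t : K | t ^ q = t} = insert 0 {t : K | t ^ (q - 1) = 1} := by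
    ext t
    simp only [Set.mem_ofPred_eq, Set.mem_insert_iff]
    refine ⟨fun ht => or_iff_not_imp_left.mpr fun h0 =>
      pow_sub_one_eq_one_of_pow_eq_self hcard h0 ht, ?_⟩
    rintro (rfl | ht)
    · exact zero_pow (by omega)
    · rw [← Nat.sub_add_cancel hq.le, pow_succ, ht, one_mul]
  have h0 : (0 : K) ∉ {t : K | t ^ (q - 1) = 1} := by
    simp [zero_pow (show q - 1 ≠ 0 by omega)]
  rw [hset, Set.ncard_insert_of_notMem h0, hunits, Nat.sub_add_cancel hq.le]

theorem ncard_pow_succ_eq_of_pow_eq_self (hcard : Fintype.card K = q ^ 2) {w : K} (hw0 : w ≠ 0)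
    (hw : w ^ q = w) : {z : K | z ^ (q + 1) = w}.ncard = q + 1 := by
  refine FiniteField.ncard_pow_eq_of_pow_eq_one ?_ ?_
  · rw [card_sub_one_eq_of_card_eq_sq hcard]
    exact dvd_mul_right _ _
  · rw [card_sub_one_eq_of_card_eq_sq hcard, Nat.mul_div_cancel_left _ q.succ_pos]
    exact pow_sub_one_eq_one_of_pow_eq_self hcard hw0 hw

theorem exists_sq_eq_pow_succ_and_pow_eq_neg (hq : Odd q) (hcard : Fintype.card K = q ^ 2)
    {θ : K} (hθ : θ ≠ 0) (hns : ¬ ∃ s : K, s ^ q = s ∧ s ^ 2 = θ ^ (q + 1)) :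
    ∃ β : K, β ^ 2 = θ ^ (q + 1) ∧ β ^ q = -β := by
  have hνq : (θ ^ (q + 1)) ^ q = θ ^ (q + 1) := by
    rw [← pow_mul, mul_comm, pow_mul, pow_succ, pow_pow_eq_self_of_card_eq_sq hcard, pow_succ,
      mul_comm]
  have h2 : 2 ∣ q + 1 := hq.add_one.two_dvd
  obtain ⟨β, hβ⟩ : ∃ β : K, β ^ 2 = θ ^ (q + 1) := by
    refine FiniteField.exists_pow_eq_of_pow_eq_one ?_ ?_
    · rw [card_sub_one_eq_of_card_eq_sq hcard]
      exact h2.mul_right _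
    · rw [card_sub_one_eq_of_card_eq_sq hcard, mul_comm, Nat.mul_div_assoc _ h2, pow_mul,
        pow_sub_one_eq_one_of_pow_eq_self hcard (pow_ne_zero _ hθ) hνq, one_pow]
  refine ⟨β, hβ, ?_⟩
  have hsq : (β ^ q) ^ 2 = β ^ 2 := by rw [← pow_mul, mul_comm, pow_mul, hβ, hνq]
  exact (sq_eq_sq_iff_eq_or_eq_neg.mp hsq).resolve_left fun h => hns ⟨β, h, hβ⟩

end QuadraticExtension

section FrobTwist

variable {K : Type} [Field K] {p n q : ℕ} [Fact p.Prime] [CharP K p] {θ β : K}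

/-- The map `L` of the proof idea: an `F`-linear bijection of `K` that turns the norm
`z ↦ z ^ (q + 1)` into the quadratic form `y ↦ θ y ^ (2q) - θ ^ q y ^ 2`, up to the factor
`-β`. -/
def frobTwist (q : ℕ) (θ β y : K) : K := θ * y ^ q + β * y

theorem frobTwist_sub (hq : q = p ^ n) (y z : K) :
    frobTwist q θ β (y - z) = frobTwist q θ β y - frobTwist q θ β z := by
  subst hq
  rw [frobTwist, frobTwist, frobTwist, sub_pow_char_pow]
  ring

variable [Fintype K]

theorem frobTwist_pow (hq : q = p ^ n) (hcard : Fintype.card K = q ^ 2) (hβq : β ^ q = -β)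
    (y : K) : frobTwist q θ β y ^ q = θ ^ q * y - β * y ^ q := by
  subst hq
  rw [frobTwist, add_pow_char_pow, mul_pow, mul_pow, pow_pow_eq_self_of_card_eq_sq hcard, hβq]
  ring

theorem frobTwist_pow_succ (hq : q = p ^ n) (hcard : Fintype.card K = q ^ 2)
    (hβ : β ^ 2 = θ ^ (q + 1)) (hβq : β ^ q = -β) (y : K) :
    frobTwist q θ β y ^ (q + 1) = -β * (θ * (y ^ q) ^ 2 - θ ^ q * y ^ 2) := by
  rw [pow_succ', frobTwist_pow hq hcard hβq, frobTwist]
  linear_combination (-(y * y ^ q)) * hβ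

theorem frobTwist_injective (hq : q = p ^ n) (hcard : Fintype.card K = q ^ 2)
    (h2 : (2 : K) ≠ 0) (hθ : θ ≠ 0) (hβ : β ^ 2 = θ ^ (q + 1)) (hβq : β ^ q = -β) :
    Function.Injective (frobTwist q θ β) := by
  intro y z hyz
  rw [← sub_eq_zero] at hyz ⊢
  rw [← frobTwist_sub hq] at hyz
  -- `L (y - z) = 0` and its conjugate `L (y - z) ^ q = 0` combine to
  -- `2 θ ^ (q + 1) (y - z) ^ q = 0`
  have hconj := frobTwist_pow hq hcard hβq (θ := θ) (y - z)
  rw [hyz, zero_pow (one_lt_of_card_eq_sq hcard).ne_bot] at hconj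
  have h : 2 * θ ^ (q + 1) * (y - z) ^ q = 0 := by
    rw [frobTwist] at hyz
    linear_combination θ ^ q * hyz + β * hconj - (y - z) ^ q * hβ
  exact pow_eq_zero_iff (one_lt_of_card_eq_sq hcard).ne_bot |>.mp <|
    (mul_eq_zero.mp h).resolve_left (mul_ne_zero h2 (pow_ne_zero _ hθ))

theorem sq_sub_mem_scalarSet_iff (hq : q = p ^ n) (hcard : Fintype.card K = q ^ 2)
    (hθ : θ ≠ 0) (hβ : β ^ 2 = θ ^ (q + 1)) (hβq : β ^ q = -β) (y b : K) :
    y ^ 2 - b ∈ scalarSet K q θ ↔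
      frobTwist q θ β y ^ (q + 1) = β * (b * θ ^ q - b ^ q * θ) := by
  have hsub : (y ^ 2 - b) ^ q = (y ^ q) ^ 2 - b ^ q := by
    subst hq
    rw [sub_pow_char_pow, pow_right_comm]
  rw [mem_scalarSet_iff hθ, hsub, frobTwist_pow_succ hq hcard hβ hβq,
    ← mul_right_inj' (neg_ne_zero.mpr (ne_zero_of_sq_eq_pow_succ hθ hβ))]
  constructor <;> intro h <;> linear_combination h

theorem mul_sub_pow_eq_self (hq : q = p ^ n) (hcard : Fintype.card K = q ^ 2)
    (hβq : β ^ q = -β) (b : K) :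
    (β * (b * θ ^ q - b ^ q * θ)) ^ q = β * (b * θ ^ q - b ^ q * θ) := by
  subst hq
  rw [mul_pow, sub_pow_char_pow, mul_pow, mul_pow, hβq, pow_pow_eq_self_of_card_eq_sq hcard,
    pow_pow_eq_self_of_card_eq_sq hcard]
  ring

theorem ncard_sq_sub_mem_scalarSet (hq : q = p ^ n) (hcard : Fintype.card K = q ^ 2)
    (h2 : (2 : K) ≠ 0) (hθ : θ ≠ 0) (hβ : β ^ 2 = θ ^ (q + 1)) (hβq : β ^ q = -β)
    (b : K) : {y : K | y ^ 2 - b ∈ scalarSet K q θ}.ncard =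
      {z : K | z ^ (q + 1) = β * (b * θ ^ q - b ^ q * θ)}.ncard := by
  have hset : {y : K | y ^ 2 - b ∈ scalarSet K q θ} =
      frobTwist q θ β ⁻¹' {z : K | z ^ (q + 1) = β * (b * θ ^ q - b ^ q * θ)} :=
    Set.ext fun y => sq_sub_mem_scalarSet_iff hq hcard hθ hβ hβq y b
  rw [hset, Set.ncard_preimage_of_bijective
    (Finite.injective_iff_bijective.mp (frobTwist_injective hq hcard h2 hθ hβ hβq))]

theorem ncard_sq_sub_mem_scalarSet_of_mem (hq : q = p ^ n) (hcard : Fintype.card K = q ^ 2)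
    (h2 : (2 : K) ≠ 0) (hθ : θ ≠ 0) (hβ : β ^ 2 = θ ^ (q + 1)) (hβq : β ^ q = -β)
    {b : K} (hb : b ∈ scalarSet K q θ) :
    {y : K | y ^ 2 - b ∈ scalarSet K q θ}.ncard = 1 := by
  rw [ncard_sq_sub_mem_scalarSet hq hcard h2 hθ hβ hβq,
    (mul_sub_eq_zero_iff_mem_scalarSet hθ hβ b).mpr hb]
  simp [pow_eq_zero_iff]

theorem ncard_sq_sub_mem_scalarSet_of_notMem (hq : q = p ^ n) (hcard : Fintype.card K = q ^ 2)
    (h2 : (2 : K) ≠ 0) (hθ : θ ≠ 0) (hβ : β ^ 2 = θ ^ (q + 1)) (hβq : β ^ q = -β)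
    {b : K} (hb : b ∉ scalarSet K q θ) :
    {y : K | y ^ 2 - b ∈ scalarSet K q θ}.ncard = q + 1 := by
  rw [ncard_sq_sub_mem_scalarSet hq hcard h2 hθ hβ hβq]
  exact ncard_pow_succ_eq_of_pow_eq_self hcard
    (mt (mul_sub_eq_zero_iff_mem_scalarSet hθ hβ b).mp hb) (mul_sub_pow_eq_self hq hcard hβq b)

end FrobTwist

section ShiftPlane

variable {K : Type} [Field K] {q : ℕ} {θ : K}

theorem ncard_affLine_inter_unitalSet (f : K → K) (a b : K) :
    (affLine K f a b ∩ unitalSet K q θ).ncard =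
      {x | f (x + a) - b ∈ scalarSet K q θ}.ncard := by
  have hset : affLine K f a b ∩ unitalSet K q θ = (fun x => (Sum.inl (x, f (x + a) - b))) ''
      {x | f (x + a) - b ∈ scalarSet K q θ} := by
    ext P
    simp only [affLine, unitalSet, scalarSet, Set.mem_inter_iff, Set.mem_ofPred_eq,
      Set.mem_image]
    aesop
  rw [hset, Set.ncard_image_of_injective _ fun x y h => (Prod.mk.inj (Sum.inl_injective h)).1]

theorem ncard_vertLine_inter_unitalSet [Finite K] (hθ : θ ≠ 0) (a : K) :
    (vertLine K a ∩ unitalSet K q θ).ncard = {t : K | t ^ q = t}.ncard + 1 := by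
  have hset : vertLine K a ∩ unitalSet K q θ = insert (Sum.inr (Sum.inr ()))
      ((fun t => Sum.inl (a, t * θ)) '' {t : K | t ^ q = t}) := by
    ext P
    simp only [vertLine, unitalSet, Set.mem_inter_iff, Set.mem_ofPred_eq, Set.mem_insert_iff,
      Set.mem_image]
    aesop
  rw [hset, Set.ncard_insert_of_notMem (by simp), Set.ncard_image_of_injective _
    fun t s h => mul_right_cancel₀ hθ (Prod.mk.inj (Sum.inl_injective h)).2]

theorem lineAtInf_inter_unitalSet :
    lineAtInf K ∩ unitalSet K q θ = {Sum.inr (Sum.inr ())} := by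
  ext P
  simp only [lineAtInf, unitalSet, Set.mem_inter_iff, Set.mem_ofPred_eq, Set.mem_singleton_iff]
  aesop

theorem ncard_inter_unitalSet_eq_one_or_eq [Finite K] (f : K → K) (hθ : θ ≠ 0)
    (hF : {t : K | t ^ q = t}.ncard = q)
    (hf : ∀ a b : K, {x | f (x + a) - b ∈ scalarSet K q θ}.ncard = 1 ∨
      {x | f (x + a) - b ∈ scalarSet K q θ}.ncard = q + 1) :
    ∀ L ∈ shiftLines K f, (L ∩ unitalSet K q θ).ncard = 1 ∨
      (L ∩ unitalSet K q θ).ncard = q + 1 := by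
  rintro L (⟨a, b, rfl⟩ | ⟨a, rfl⟩ | rfl)
  · rw [ncard_affLine_inter_unitalSet]
    exact hf a b
  · rw [ncard_vertLine_inter_unitalSet hθ, hF]
    exact .inr rfl
  · rw [lineAtInf_inter_unitalSet, Set.ncard_singleton]
    exact .inl rfl

end ShiftPlane

theorem stmt5_general (n q : ℕ) (hq : q = 3 ^ n)
    (K : Type) [Field K] [Fintype K] (hcard : Fintype.card K = q ^ 2)
    (k d : ℕ) (hk : Nat.gcd k (2 * n) = 1) (hd : 2 * d = 3 ^ k + 1) :
    (∀ c : K,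
      {x : K | x ^ d = c}.ncard = {y : K | y ^ 2 = c}.ncard) ∧
    (∀ θ : K, θ ≠ 0 → (¬ ∃ s : K, s ^ q = s ∧ s ^ 2 = θ ^ (q + 1)) →
      (∀ a b : K,
        (b ∈ scalarSet K q θ →
          {x : K | (x + a) ^ d - b ∈ scalarSet K q θ}.ncard = 1) ∧
        (b ∉ scalarSet K q θ →
          {x : K | (x + a) ^ d - b ∈ scalarSet K q θ}.ncard = q + 1)) ∧
      (∀ L ∈ shiftLines K (fun x : K => x ^ d),
        (L ∩ unitalSet K q θ).ncard = 1 ∨ (L ∩ unitalSet K q θ).ncard = q + 1)) := by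
  have : Fact (Nat.Prime 3) := ⟨Nat.prime_three⟩
  have hcard' : Fintype.card K = 3 ^ (2 * n) := by rw [hcard, hq, ← pow_mul, mul_comm]
  have : CharP K 3 := charP_of_card_eq_prime_pow hcard'
  obtain ⟨d₁, rfl, hcop⟩ := exists_eq_two_mul_coprime_three_pow_sub_one hk hd
  have hd₁ : d₁ ≠ 0 := by
    rintro rfl
    simp at hd
  have hsq := FiniteField.ncard_setOf_pow_two_mul hd₁ (hcard' ▸ hcop)
  have h2 : (2 : K) ≠ 0 := Ring.two_ne_zero (by rw [ringChar.eq K 3]; decide)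
  refine ⟨fun c => by simpa using hsq 0 (· = c), fun θ hθ hns => ?_⟩
  obtain ⟨β, hβ, hβq⟩ :=
    exists_sq_eq_pow_succ_and_pow_eq_neg (hq ▸ Odd.pow (by decide)) hcard hθ hns
  have hlines (a b : K) := And.intro
    (fun hb => (hsq a (· - b ∈ scalarSet K q θ)).trans
      (ncard_sq_sub_mem_scalarSet_of_mem hq hcard h2 hθ hβ hβq hb))
    (fun hb => (hsq a (· - b ∈ scalarSet K q θ)).trans
      (ncard_sq_sub_mem_scalarSet_of_notMem hq hcard h2 hθ hβ hβq hb))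
  refine ⟨hlines,
    ncard_inter_unitalSet_eq_one_or_eq _ hθ (ncard_pow_eq_self hcard) fun a b => ?_⟩
  by_cases hb : b ∈ scalarSet K q θ
  exacts [.inl ((hlines a b).1 hb), .inr ((hlines a b).2 hb)]

/-- Theorem 2.4 (c).  For the Coulter–Matthews planar function
`f(x) = x^{(3^k+1)/2}` on `K = F_{3^{2n}}` with `gcd(k,2n) = 1` and `q = 3ⁿ`,
every `c` satisfies `#{x : f(x) = c} = #{y : y² = c}`, and for every `θ ≠ 0`
with `θ^{q+1}` a nonsquare in the subfield `F` of order `q` and all `a b`, the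
number of `x` with `f(x+a) − b ∈ θF` is `1` if `b ∈ θF` and `q+1` otherwise;
hence `U_θ` is a unital in the Coulter–Matthews plane `Π(f)`. -/
theorem stmt5 (n q : ℕ) (hn : 0 < n) (hq : q = 3 ^ n)
    (K : Type) [Field K] [Fintype K] (hcard : Fintype.card K = q ^ 2)
    (k d : ℕ) (hk : Nat.gcd k (2 * n) = 1) (hd : 2 * d = 3 ^ k + 1) :
    (∀ c : K,
      {x : K | x ^ d = c}.ncard = {y : K | y ^ 2 = c}.ncard) ∧
    (∀ θ : K, θ ≠ 0 → (¬ ∃ s : K, s ^ q = s ∧ s ^ 2 = θ ^ (q + 1)) →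
      (∀ a b : K,
        (b ∈ scalarSet K q θ →
          {x : K | (x + a) ^ d - b ∈ scalarSet K q θ}.ncard = 1) ∧
        (b ∉ scalarSet K q θ →
          {x : K | (x + a) ^ d - b ∈ scalarSet K q θ}.ncard = q + 1)) ∧
      (∀ L ∈ shiftLines K (fun x : K => x ^ d),
        (L ∩ unitalSet K q θ).ncard = 1 ∨ (L ∩ unitalSet K q θ).ncard = q + 1)) :=
  stmt5_general n q hq K hcard k d hk hd
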